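/- arXiv:1203.3142 — 6 statements merged into one kernel-verified Lean document; each statement's English description precedes it below -/
import Mathlib

section
/- Let F : ℝⁿ → ℝ (n ≥ 2) be smooth on ℝⁿ \ {0}, continuous on ℝⁿ, positively homogeneous of degree 1, with positive quasi-definite Hessian at every nonzero point. Then for y ≠ 0 and z not a positive scalar multiple of y, the fundamental inequality is strict: F(z) > zⁱ ∂F/∂yⁱ(y). -/
open Set

private lemma sfi_contDiffAt {n : ℕ} {F : (Fin n → ℝ) → ℝ}
    (hsmooth : ContDiffOn ℝ (⊤ : ℕ∞) F {y | y ≠ 0}) {x : Fin n → ℝ} (hx : x ≠ 0) :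
    ContDiffAt ℝ (⊤ : ℕ∞) F x :=
  hsmooth.contDiffAt (isOpen_ne.mem_nhds hx)

private lemma sfi_diff {n : ℕ} {F : (Fin n → ℝ) → ℝ}
    (hsmooth : ContDiffOn ℝ (⊤ : ℕ∞) F {y | y ≠ 0}) {x : Fin n → ℝ} (hx : x ≠ 0) :
    DifferentiableAt ℝ F x :=
  (sfi_contDiffAt hsmooth hx).differentiableAt (by simp)

private lemma sfi_diff' {n : ℕ} {F : (Fin n → ℝ) → ℝ}
    (hsmooth : ContDiffOn ℝ (⊤ : ℕ∞) F {y | y ≠ 0}) {x : Fin n → ℝ} (hx : x ≠ 0) :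
    DifferentiableAt ℝ (fderiv ℝ F) x :=
  ((sfi_contDiffAt hsmooth hx).fderiv_right (m := 1) (WithTop.coe_le_coe.mpr le_top)).differentiableAt one_ne_zero

private lemma sfi_euler {n : ℕ} {F : (Fin n → ℝ) → ℝ}
    (hhom : ∀ k : ℝ, 0 < k → ∀ y : Fin n → ℝ, F (k • y) = k * F y)
    (hsmooth : ContDiffOn ℝ (⊤ : ℕ∞) F {y | y ≠ 0}) {y : Fin n → ℝ} (hy : y ≠ 0) :
    fderiv ℝ F y y = F y := by
  have hc : HasDerivAt (fun k : ℝ => k • y) y 1 := by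
    simpa using (hasDerivAt_id (1 : ℝ)).smul_const y
  have h1 : HasDerivAt (fun k : ℝ => F (k • y)) (fderiv ℝ F y y) 1 := by
    have hF : HasFDerivAt F (fderiv ℝ F y) ((fun k : ℝ => k • y) 1) := by
      simp only [one_smul]
      exact (sfi_diff hsmooth hy).hasFDerivAt
    have h2 : HasDerivAt (fun k : ℝ => k • y) y 1 := by
      simpa using (hasDerivAt_id (1:ℝ)).smul_const y
    exact hF.comp_hasDerivAt 1 h2
  have h2 : HasDerivAt (fun k : ℝ => F (k • y)) (F y) 1 := by
    have hm : HasDerivAt (fun k : ℝ => k * F y) (F y) 1 := by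
      simpa using (hasDerivAt_id (1 : ℝ)).mul_const (F y)
    refine hm.congr_of_eventuallyEq ?_
    filter_upwards [eventually_gt_nhds (zero_lt_one)] with k hk
    exact hhom k hk y
  exact h1.unique h2

private lemma sfi_segment {n : ℕ} {F : (Fin n → ℝ) → ℝ}
    (hhom : ∀ k : ℝ, 0 < k → ∀ y : Fin n → ℝ, F (k • y) = k * F y)
    (hsmooth : ContDiffOn ℝ (⊤ : ℕ∞) F {y | y ≠ 0})
    (hquasi : ∀ y : Fin n → ℝ, y ≠ 0 → ∀ v : Fin n → ℝ,
      0 ≤ iteratedFDeriv ℝ 2 F y ![v, v] ∧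
      (iteratedFDeriv ℝ 2 F y ![v, v] = 0 → ∃ c : ℝ, v = c • y))
    {y z : Fin n → ℝ} (hy : y ≠ 0)
    (hseg : ∀ t : ℝ, t ∈ Icc (0:ℝ) 1 → y + t • (z - y) ≠ 0)
    (hz : ¬ ∃ k : ℝ, 0 ≤ k ∧ z = k • y) :
    fderiv ℝ F y z < F z := by
  set v : Fin n → ℝ := z - y with hv
  set c : ℝ → (Fin n → ℝ) := fun t => y + t • v with hcdef
  set L : (Fin n → ℝ) →L[ℝ] ℝ := fderiv ℝ F y with hL
  set g : ℝ → ℝ := fun t => F (c t) - L (c t) with hgdef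
  set G : ℝ → ℝ := fun t => fderiv ℝ F (c t) v - L v with hGdef
  have hc0 : c 0 = y := by simp [hcdef]
  have hc1 : c 1 = z := by simp [hcdef, hv]
  have hcd : ∀ t : ℝ, HasDerivAt c v t := by
    intro t
    have : HasDerivAt (fun t : ℝ => t • v) v t := by
      simpa using (hasDerivAt_id t).smul_const v
    simpa [hcdef] using this.const_add y
  have hg : ∀ t : ℝ, c t ≠ 0 → HasDerivAt g (G t) t := by
    intro t ht
    have h1 : HasDerivAt (fun t => F (c t)) (fderiv ℝ F (c t) v) t :=
      (sfi_diff hsmooth ht).hasFDerivAt.comp_hasDerivAt t (hcd t)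
    have h2 : HasDerivAt (fun t => L (c t)) (L v) t :=
      L.hasFDerivAt.comp_hasDerivAt t (hcd t)
    exact h1.sub h2
  have hG : ∀ t : ℝ, c t ≠ 0 →
      HasDerivAt G (iteratedFDeriv ℝ 2 F (c t) ![v, v]) t := by
    intro t ht
    have h1 : HasDerivAt (fun t => fderiv ℝ F (c t)) (fderiv ℝ (fderiv ℝ F) (c t) v) t :=
      (sfi_diff' hsmooth ht).hasFDerivAt.comp_hasDerivAt t (hcd t)
    have h2 := ((ContinuousLinearMap.apply ℝ ℝ v).hasFDerivAt.comp_hasDerivAt t h1)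
    have h3 : HasDerivAt (fun t => fderiv ℝ F (c t) v)
        (fderiv ℝ (fderiv ℝ F) (c t) v v) t := by exact h2
    have h4 := h3.sub_const (L v)
    have he : iteratedFDeriv ℝ 2 F (c t) ![v, v] = fderiv ℝ (fderiv ℝ F) (c t) v v := by
      rw [iteratedFDeriv_two_apply]; simp
    rw [he]
    exact h4
  have hseg' : ∀ t : ℝ, t ∈ Icc (0:ℝ) 1 → c t ≠ 0 := hseg
  -- G is monotone on [0,1]
  have hGmono : MonotoneOn G (Icc (0:ℝ) 1) := by
    apply monotoneOn_of_deriv_nonneg (convex_Icc 0 1)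
    · intro t ht
      exact ((hG t (hseg' t ht)).continuousAt).continuousWithinAt
    · intro t ht
      rw [interior_Icc] at ht
      exact ((hG t (hseg' t (Ioo_subset_Icc_self ht))).differentiableAt).differentiableWithinAt
    · intro t ht
      rw [interior_Icc] at ht
      rw [(hG t (hseg' t (Ioo_subset_Icc_self ht))).deriv]
      exact (hquasi _ (hseg' t (Ioo_subset_Icc_self ht)) v).1
  have hG0 : G 0 = 0 := by simp [hGdef, hc0, hL]
  have hGnonneg : ∀ t ∈ Icc (0:ℝ) 1, 0 ≤ G t := by
    intro t ht
    have := hGmono (left_mem_Icc.2 zero_le_one) ht ht.1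
    rwa [hG0] at this
  -- g is monotone on [0,1]
  have hgmono : MonotoneOn g (Icc (0:ℝ) 1) := by
    apply monotoneOn_of_deriv_nonneg (convex_Icc 0 1)
    · intro t ht
      exact ((hg t (hseg' t ht)).continuousAt).continuousWithinAt
    · intro t ht
      rw [interior_Icc] at ht
      exact ((hg t (hseg' t (Ioo_subset_Icc_self ht))).differentiableAt).differentiableWithinAt
    · intro t ht
      rw [interior_Icc] at ht
      rw [(hg t (hseg' t (Ioo_subset_Icc_self ht))).deriv]
      exact hGnonneg t (Ioo_subset_Icc_self ht)
  have hg0 : g 0 = 0 := by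
    simp [hgdef, hc0, hL, sfi_euler hhom hsmooth hy]
  have hg1 : 0 ≤ g 1 := by
    have := hgmono (left_mem_Icc.2 zero_le_one) (right_mem_Icc.2 zero_le_one) zero_le_one
    rwa [hg0] at this
  -- strictness
  rcases lt_or_ge (fderiv ℝ F y z) (F z) with h | h
  · exact h
  exfalso
  have hg1' : g 1 = 0 := by
    have : g 1 ≤ 0 := by simp only [hgdef, hc1]; linarith [h]
    linarith
  have hgzero : ∀ t ∈ Icc (0:ℝ) 1, g t = 0 := by
    intro t ht
    have h1 : g 0 ≤ g t := hgmono (left_mem_Icc.2 zero_le_one) ht ht.1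
    have h2 : g t ≤ g 1 := hgmono ht (right_mem_Icc.2 zero_le_one) ht.2
    rw [hg0] at h1; rw [hg1'] at h2; linarith
  have hGzero : ∀ t ∈ Ioo (0:ℝ) 1, G t = 0 := by
    intro t ht
    have hev : g =ᶠ[nhds t] fun _ => 0 := by
      filter_upwards [isOpen_Ioo.mem_nhds ht] with s hs
      exact hgzero s (Ioo_subset_Icc_self hs)
    have hz' : HasDerivAt g 0 t := (hasDerivAt_const t (0:ℝ)).congr_of_eventuallyEq hev
    exact ((hg t (hseg' t (Ioo_subset_Icc_self ht))).unique hz')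
  -- second derivative vanishes at 1/2
  have hhalf : (1/2 : ℝ) ∈ Ioo (0:ℝ) 1 := by norm_num
  have hDvv : iteratedFDeriv ℝ 2 F (c (1/2)) ![v, v] = 0 := by
    have hev : G =ᶠ[nhds (1/2 : ℝ)] fun _ => 0 := by
      filter_upwards [isOpen_Ioo.mem_nhds hhalf] with s hs
      exact hGzero s hs
    have hz' : HasDerivAt G 0 (1/2) := (hasDerivAt_const _ (0:ℝ)).congr_of_eventuallyEq hev
    exact (hG _ (hseg' _ (Ioo_subset_Icc_self hhalf))).unique hz'
  obtain ⟨a, ha⟩ := (hquasi _ (hseg' _ (Ioo_subset_Icc_self hhalf)) v).2 hDvv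
  -- ha : v = a • (y + (1/2) • v)
  have ha' : (1 - a/2) • v = a • y := by
    have hc12 : c (1/2 : ℝ) = y + (1/2 : ℝ) • v := rfl
    rw [hc12] at ha
    linear_combination (norm := module) ha
  by_cases ha2 : (1 - a/2 : ℝ) = 0
  · have haknown : a = 2 := by linarith
    rw [ha2, zero_smul] at ha'
    rw [haknown] at ha'
    have : y = 0 := by
      simpa using (smul_eq_zero.mp ha'.symm).resolve_left (by norm_num)
    exact hy this
  · have hvb : v = (a / (1 - a/2)) • y := by
      have h2 := congrArg (fun w => (1 - a/2)⁻¹ • w) ha'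
      simp only [smul_smul] at h2
      rw [inv_mul_cancel₀ ha2, one_smul] at h2
      rw [div_eq_mul_inv, mul_comm a]
      exact h2
    set m : ℝ := 1 + a / (1 - a/2) with hm
    have hzm : z = m • y := by
      have : z = y + v := by rw [hv]; module
      rw [this, hvb, hm]; module
    have hmneg : m < 0 := by
      by_contra hmn
      exact hz ⟨m, not_lt.mp hmn, hzm⟩
    -- then the segment hits 0
    have ht0 : (1 / (1 - m) : ℝ) ∈ Icc (0:ℝ) 1 := by
      constructor
      · exact div_nonneg zero_le_one (by linarith)
      · rw [div_le_one (by linarith)]; linarith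
    apply hseg' _ ht0
    have hvy : v = (m - 1) • y := by
      rw [hvb, hm]; module
    rw [hcdef]
    show y + (1/(1-m)) • v = 0
    rw [hvy, smul_smul]
    have : (1/(1-m)) * (m - 1) = -1 := by
      rw [div_mul_eq_mul_div, one_mul, div_eq_iff (by linarith : (1:ℝ) - m ≠ 0)]
      ring
    rw [this]; module

theorem strict_fundamental_inequality (n : ℕ) (hn : 2 ≤ n)
    (F : (Fin n → ℝ) → ℝ)
    (hcont : Continuous F)
    (hsmooth : ContDiffOn ℝ (⊤ : ℕ∞) F {y | y ≠ 0})
    (hhom : ∀ k : ℝ, 0 < k → ∀ y : Fin n → ℝ, F (k • y) = k * F y)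
    (hquasi : ∀ y : Fin n → ℝ, y ≠ 0 → ∀ v : Fin n → ℝ,
      0 ≤ iteratedFDeriv ℝ 2 F y ![v, v] ∧
      (iteratedFDeriv ℝ 2 F y ![v, v] = 0 → ∃ c : ℝ, v = c • y)) :
    ∀ y z : Fin n → ℝ, y ≠ 0 → (¬ ∃ k : ℝ, 0 ≤ k ∧ z = k • y) →
      fderiv ℝ F y z < F z := by
  intro y z hy hz
  by_cases hseg : ∀ t : ℝ, t ∈ Icc (0:ℝ) 1 → y + t • (z - y) ≠ 0
  · exact sfi_segment hhom hsmooth hquasi hy hseg hz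
  · push_neg at hseg
    obtain ⟨t, ht, hct⟩ := hseg
    have ht0 : t ≠ 0 := by
      intro h; rw [h] at hct; simp at hct; exact hy hct
    have htpos : 0 < t := lt_of_le_of_ne ht.1 (Ne.symm ht0)
    -- z = m • y with m = (t-1)/t ≤ 0
    have hzm : z = ((t - 1)/t) • y := by
      have h1 : t • z = (t - 1) • y := by
        linear_combination (norm := module) hct
      have h2 := congrArg (fun w => t⁻¹ • w) h1
      simp only [smul_smul] at h2
      rw [inv_mul_cancel₀ ht0, one_smul] at h2
      rw [div_eq_mul_inv, mul_comm (t-1)]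
      exact h2
    set m : ℝ := (t - 1)/t with hm
    have hm0 : m ≠ 0 := by
      intro h
      exact hz ⟨0, le_rfl, by rw [hzm, h, zero_smul]⟩
    have hmlt : m < 0 := by
      have hmt : m * t = t - 1 := by
        rw [hm, div_mul_eq_mul_div, mul_div_assoc, div_self ht0, mul_one]
      rcases lt_trichotomy m 0 with h | h | h
      · exact h
      · exact absurd h hm0
      · nlinarith [ht.2]
    -- find w not collinear with y
    obtain ⟨i, hyi⟩ : ∃ i, y i ≠ 0 := Function.ne_iff.mp hy
    have hn1 : 1 < n := hn
    set j : Fin n := ⟨if (i : ℕ) = 0 then 1 else 0, by split_ifs <;> omega⟩ with hj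
    have hij : j ≠ i := by
      intro h
      apply_fun (Fin.val) at h
      rw [hj] at h
      simp only at h
      split_ifs at h with h0 <;> omega
    set w : Fin n → ℝ := Pi.single j (y i) - Pi.single i (y j) with hw
    have hwi : w i = - y j := by
      simp [hw, Pi.single_eq_of_ne hij.symm]
    have hwj : w j = y i := by
      simp [hw, Pi.single_eq_of_ne hij]
    have hindep : ∀ a : ℝ, w ≠ a • y := by
      intro a h
      have h1 : w i = a * y i := by rw [h]; simp
      have h2 : w j = a * y j := by rw [h]; simp
      rw [hwi] at h1
      rw [hwj] at h2
      have h4 : y j = -(a * y i) := by linarith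
      rw [h4] at h2
      have h5 : y i * (1 + a * a) = 0 := by linear_combination h2
      have h6 : (0:ℝ) < 1 + a * a := by nlinarith [mul_self_nonneg a]
      rcases mul_eq_zero.mp h5 with h | h
      · exact hyi h
      · linarith
    have hw0 : w ≠ 0 := by
      intro h
      exact hindep 0 (by rw [h]; simp)
    -- segment conditions for w → y and w → -y
    have hsegpm : ∀ s : Fin n → ℝ, (s = y ∨ s = -y) →
        ∀ u : ℝ, u ∈ Icc (0:ℝ) 1 → w + u • (s - w) ≠ 0 := by
      intro s hs u hu h
      have hcomb : (1 - u) • w + u • s = 0 := by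
        rw [← h]; module
      by_cases hu1 : u = 1
      · rw [hu1] at hcomb
        simp at hcomb
        rcases hs with rfl | rfl
        · exact hy hcomb
        · exact hy (by simpa using congrArg Neg.neg hcomb)
      · have h1u : (1 - u) ≠ 0 := by
          intro hq; apply hu1; linarith [hu.2]
        have : w = ((1-u)⁻¹ * (-u)) • s := by
          have h2 : (1 - u) • w = (-u) • s := by
            linear_combination (norm := module) hcomb
          have := congrArg (fun q => (1-u)⁻¹ • q) h2
          simpa [smul_smul, inv_mul_cancel₀ h1u] using this
        rcases hs with rfl | rfl
        · exact hindep _ this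
        · exact hindep (-((1-u)⁻¹ * (-u))) (by rw [this]; module)
    have hnm : ∀ s : Fin n → ℝ, (s = y ∨ s = -y) → ¬ ∃ k : ℝ, 0 ≤ k ∧ s = k • w := by
      rintro s hs ⟨k, hk, hks⟩
      have hk0 : k ≠ 0 := by
        intro h
        rw [h, zero_smul] at hks
        rcases hs with rfl | rfl
        · exact hy hks
        · exact hy (by simpa using congrArg Neg.neg hks)
      have hwk : w = k⁻¹ • s := by
        have := congrArg (fun q => k⁻¹ • q) hks
        simpa [smul_smul, inv_mul_cancel₀ hk0] using this.symm
      rcases hs with rfl | rfl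
      · exact hindep k⁻¹ hwk
      · exact hindep (-k⁻¹) (by rw [hwk]; module)
    have hA : fderiv ℝ F w y < F y :=
      sfi_segment hhom hsmooth hquasi hw0 (hsegpm y (Or.inl rfl)) (hnm y (Or.inl rfl))
    have hB : fderiv ℝ F w (-y) < F (-y) :=
      sfi_segment hhom hsmooth hquasi hw0 (hsegpm (-y) (Or.inr rfl)) (hnm (-y) (Or.inr rfl))
    have hBneg : fderiv ℝ F w (-y) = -(fderiv ℝ F w y) := by
      rw [map_neg]
    have hsum : 0 < F y + F (-y) := by
      rw [hBneg] at hB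
      linarith
    -- conclude
    have hfz : fderiv ℝ F y z = m * F y := by
      rw [hzm, map_smul, sfi_euler hhom hsmooth hy]
      simp
    have hFz : F z = (-m) * F (-y) := by
      have hzw : z = (-m) • (-y) := by rw [hzm]; module
      rw [hzw, hhom (-m) (by linarith) (-y)]
    rw [hfz, hFz]
    nlinarith
end

section
/- Let F : ℝⁿ → ℝ (n ≥ 2) be smooth on ℝⁿ \ {0}, continuous on ℝⁿ, absolutely homogeneous of degree 1 (F(ky) = |k|F(y) for all k ∈ ℝ), with positive quasi-definite Hessian at every nonzero point. Then F(y) > 0 for all y ≠ 0. -/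
open Filter Topology

lemma deriv2_line {n : ℕ} (F : (Fin n → ℝ) → ℝ)
    (hsmooth : ContDiffOn ℝ (⊤ : ℕ∞) F {y | y ≠ 0})
    (y v : Fin n → ℝ) (hne : ∀ t : ℝ, y + t • v ≠ 0) (t : ℝ) :
    deriv (deriv (fun s : ℝ => F (y + s • v))) t
      = iteratedFDeriv ℝ 2 F (y + t • v) ![v, v] := by
  have hopen : IsOpen {y : Fin n → ℝ | y ≠ 0} := isOpen_ne
  have hCA : ∀ s : ℝ, ContDiffAt ℝ 2 F (y + s • v) := fun s =>
    (hsmooth.contDiffAt (hopen.mem_nhds (hne s))).of_le (by exact WithTop.coe_le_coe.mpr le_top)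
  have hc : ∀ s : ℝ, HasDerivAt (fun u : ℝ => y + u • v) v s := fun s => by
    simpa using ((hasDerivAt_id s).smul_const v).const_add y
  have hd1 : ∀ s : ℝ, HasDerivAt (fun u : ℝ => F (y + u • v))
      (fderiv ℝ F (y + s • v) v) s := fun s =>
    ((hCA s).differentiableAt (by norm_num)).hasFDerivAt.comp_hasDerivAt s (hc s)
  have hderiv1 : deriv (fun s : ℝ => F (y + s • v))
      = fun s : ℝ => fderiv ℝ F (y + s • v) v := funext fun s => (hd1 s).deriv
  rw [hderiv1]
  have hd2 : HasDerivAt (fun s : ℝ => fderiv ℝ F (y + s • v))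
      (fderiv ℝ (fderiv ℝ F) (y + t • v) v) t := by
    have : ContDiffAt ℝ 1 (fderiv ℝ F) (y + t • v) := (hCA t).fderiv_right (by norm_num)
    exact (this.differentiableAt (by norm_num)).hasFDerivAt.comp_hasDerivAt t (hc t)
  have := hd2.clm_apply (hasDerivAt_const t v)
  rw [iteratedFDeriv_two_apply]
  simpa using this.deriv

lemma midpoint_lt {n : ℕ} (F : (Fin n → ℝ) → ℝ)
    (hcont : Continuous F)
    (hsmooth : ContDiffOn ℝ (⊤ : ℕ∞) F {y | y ≠ 0})
    (hquasi : ∀ y : Fin n → ℝ, y ≠ 0 → ∀ v : Fin n → ℝ,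
      0 ≤ iteratedFDeriv ℝ 2 F y ![v, v] ∧
      (iteratedFDeriv ℝ 2 F y ![v, v] = 0 → ∃ c : ℝ, v = c • y))
    (y v : Fin n → ℝ) (hind : ∀ a b : ℝ, a • y + b • v = 0 → a = 0 ∧ b = 0) :
    2 * F y < F (y + v) + F (y - v) := by
  have hne : ∀ t : ℝ, y + t • v ≠ 0 := by
    intro t h
    have := hind 1 t (by simpa using h)
    simpa using this.1
  have hpos : ∀ t : ℝ, 0 < (deriv^[2] (fun s : ℝ => F (y + s • v))) t := by
    intro t
    have h2 : (deriv^[2] (fun s : ℝ => F (y + s • v))) t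
        = iteratedFDeriv ℝ 2 F (y + t • v) ![v, v] := by
      simp only [Function.iterate_succ, Function.iterate_zero, Function.comp_apply, id_eq]
      exact deriv2_line F hsmooth y v hne t
    rw [h2]
    obtain ⟨h0, heq⟩ := hquasi (y + t • v) (hne t) v
    rcases h0.lt_or_eq with h | h
    · exact h
    · exfalso
      obtain ⟨c, hc⟩ := heq h.symm
      have hkey : c • y + (c * t - 1) • v = 0 := by
        have hc' : c • y = v - c • (t • v) := by
          rw [smul_add] at hc
          exact eq_sub_of_add_eq hc.symm
        rw [sub_smul, mul_smul, one_smul, hc']; abel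
      have h2 := hind _ _ hkey
      have h3 : c * t - 1 = 0 := h2.2
      rw [h2.1] at h3
      norm_num at h3
  have hsc : StrictConvexOn ℝ Set.univ (fun s : ℝ => F (y + s • v)) :=
    strictConvexOn_univ_of_deriv2_pos
      (hcont.comp (continuous_const.add (continuous_id.smul continuous_const))) hpos
  have := hsc.2 (Set.mem_univ (-1 : ℝ)) (Set.mem_univ (1 : ℝ)) (by norm_num)
      (by norm_num : (0:ℝ) < 1/2) (by norm_num : (0:ℝ) < 1/2) (by norm_num : (1:ℝ)/2 + 1/2 = 1)
  simp only at this
  have e0 : (1/2 : ℝ) • (-1 : ℝ) + (1/2 : ℝ) • (1 : ℝ) = 0 := by norm_num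
  rw [e0] at this
  have e1 : y + (0 : ℝ) • v = y := by simp
  have e2 : y + (-1 : ℝ) • v = y - v := by simp [sub_eq_add_neg]
  have e3 : y + (1 : ℝ) • v = y + v := by simp
  rw [e1, e2, e3] at this
  rw [smul_eq_mul, smul_eq_mul] at this
  linarith

section Aux
variable {n : ℕ} (F : (Fin n → ℝ) → ℝ)


lemma tendsto_key (hsmooth : ContDiffOn ℝ (⊤ : ℕ∞) F {y | y ≠ 0})
    (y v : Fin n → ℝ) (hv : v ≠ 0) :
    Tendsto (fun R : ℝ => R * ((F (v + R⁻¹ • y) + F (v + R⁻¹ • (-y))) - 2 * F v))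
      atTop (𝓝 0) := by
  set φ : ℝ → ℝ := fun t => F (v + t • y) + F (v + t • (-y)) with hφdef
  have hopen : IsOpen {y : Fin n → ℝ | y ≠ 0} := isOpen_ne
  have hF2 : ContDiffAt ℝ 2 F v := (hsmooth.contDiffAt (hopen.mem_nhds hv)).of_le (by exact WithTop.coe_le_coe.mpr le_top)
  have hdiff : DifferentiableAt ℝ F v := hF2.differentiableAt (by norm_num)
  have hline : ∀ w : Fin n → ℝ, HasDerivAt (fun t : ℝ => v + t • w) w 0 := fun w => by
    simpa using ((hasDerivAt_id (0:ℝ)).smul_const w).const_add v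
  have hFv : HasFDerivAt F (fderiv ℝ F v) (v + (0:ℝ) • y) := by
    simpa using hdiff.hasFDerivAt
  have hFv' : HasFDerivAt F (fderiv ℝ F v) (v + (0:ℝ) • (-y)) := by
    simpa using hdiff.hasFDerivAt
  have h1 : HasDerivAt (fun t : ℝ => F (v + t • y)) (fderiv ℝ F v y) 0 :=
    hFv.comp_hasDerivAt 0 (hline y)
  have h2 : HasDerivAt (fun t : ℝ => F (v + t • (-y))) (fderiv ℝ F v (-y)) 0 :=
    hFv'.comp_hasDerivAt 0 (hline (-y))
  have hφ : HasDerivAt φ 0 0 := by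
    have h3 := h1.add h2
    rw [map_neg, add_neg_cancel] at h3
    exact h3
  rw [hasDerivAt_iff_tendsto_slope] at hφ
  have hinv : Tendsto (fun R : ℝ => R⁻¹) atTop (𝓝[≠] (0:ℝ)) := by
    apply tendsto_nhdsWithin_of_tendsto_nhds_of_eventually_within _ tendsto_inv_atTop_zero
    filter_upwards [eventually_gt_atTop (0:ℝ)] with R hR
    exact (inv_pos.mpr hR).ne'
  have T := hφ.comp hinv
  have heq : (fun R : ℝ => slope φ 0 R⁻¹) =ᶠ[atTop]
      (fun R : ℝ => R * ((F (v + R⁻¹ • y) + F (v + R⁻¹ • (-y))) - 2 * F v)) := by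
    filter_upwards [eventually_gt_atTop (0:ℝ)] with R hR
    have hφ0 : φ 0 = 2 * F v := by simp [hφdef]; ring
    rw [slope_def_field, hφ0, sub_zero]
    simp only [hφdef]
    rw [div_eq_mul_inv, inv_inv, mul_comm]
  have := T.congr' heq
  simpa using this

lemma ineq_key
    (hcont : Continuous F)
    (hsmooth : ContDiffOn ℝ (⊤ : ℕ∞) F {y | y ≠ 0})
    (hhom : ∀ k : ℝ, ∀ y : Fin n → ℝ, F (k • y) = |k| * F y)
    (hquasi : ∀ y : Fin n → ℝ, y ≠ 0 → ∀ v : Fin n → ℝ,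
      0 ≤ iteratedFDeriv ℝ 2 F y ![v, v] ∧
      (iteratedFDeriv ℝ 2 F y ![v, v] = 0 → ∃ c : ℝ, v = c • y))
    (y v : Fin n → ℝ) (hind : ∀ a b : ℝ, a • y + b • v = 0 → a = 0 ∧ b = 0)
    (R : ℝ) (hR : 0 < R) :
    2 * F y < R * (F (v + R⁻¹ • y) + F (v + R⁻¹ • (-y))) := by
  have hind' : ∀ a b : ℝ, a • y + b • (R • v) = 0 → a = 0 ∧ b = 0 := by
    intro a b h
    have h2 := hind a (b * R) (by rwa [mul_smul])
    refine ⟨h2.1, ?_⟩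
    rcases mul_eq_zero.mp h2.2 with h | h
    · exact h
    · exact absurd h hR.ne'
  have hmid := midpoint_lt F hcont hsmooth hquasi y (R • v) hind'
  have hA : y + R • v = R • (v + R⁻¹ • y) := by
    rw [smul_add, smul_smul, mul_inv_cancel₀ hR.ne', one_smul, add_comm]
  have hB : y - R • v = (-R) • (v + R⁻¹ • (-y)) := by
    rw [smul_add, smul_smul]
    have : -R * R⁻¹ = -1 := by field_simp
    rw [this]
    simp only [neg_smul, one_smul, neg_neg]
    abel
  rw [hA, hB, hhom R _, hhom (-R) _, abs_of_pos hR, abs_neg, abs_of_pos hR] at hmid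
  linarith

end Aux

-- existence of independent vector
lemma exists_indep {n : ℕ} (hn : 2 ≤ n) (v : Fin n → ℝ) (hv : v ≠ 0) :
    ∃ w : Fin n → ℝ, ∀ a b : ℝ, a • w + b • v = 0 → a = 0 ∧ b = 0 := by
  have hspan : Submodule.span ℝ {v} ≠ ⊤ := by
    intro h
    have h1 : Module.finrank ℝ (Submodule.span ℝ {v}) = 1 := finrank_span_singleton hv
    rw [h, finrank_top] at h1
    rw [Module.finrank_fin_fun] at h1
    omega
  obtain ⟨w, hw⟩ : ∃ w, w ∉ Submodule.span ℝ {v} := by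
    by_contra h
    push_neg at h
    exact hspan (eq_top_iff.mpr fun x _ => h x)
  refine ⟨w, fun a b hab => ?_⟩
  have ha : a = 0 := by
    by_contra ha
    apply hw
    have : w = (a⁻¹ * (-b)) • v := by
      have h1 : a • w = (-b) • v := by
        rw [neg_smul]
        exact eq_neg_of_add_eq_zero_left hab
      rw [mul_smul, ← h1, smul_smul, inv_mul_cancel₀ ha, one_smul]
    rw [this]
    exact Submodule.mem_span_singleton.mpr ⟨_, rfl⟩
  refine ⟨ha, ?_⟩
  rw [ha, zero_smul, zero_add] at hab
  rcases smul_eq_zero.mp hab with h | h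
  · exact h
  · exact absurd h hv

theorem abs_homogeneous_quasi_definite_positive (n : ℕ) (hn : 2 ≤ n)
    (F : (Fin n → ℝ) → ℝ)
    (hcont : Continuous F)
    (hsmooth : ContDiffOn ℝ (⊤ : ℕ∞) F {y | y ≠ 0})
    (hhom : ∀ k : ℝ, ∀ y : Fin n → ℝ, F (k • y) = |k| * F y)
    (hquasi : ∀ y : Fin n → ℝ, y ≠ 0 → ∀ v : Fin n → ℝ,
      0 ≤ iteratedFDeriv ℝ 2 F y ![v, v] ∧
      (iteratedFDeriv ℝ 2 F y ![v, v] = 0 → ∃ c : ℝ, v = c • y)) :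
    ∀ y : Fin n → ℝ, y ≠ 0 → 0 < F y := by
  intro y0 hy0
  by_contra hcon
  push_neg at hcon
  -- Step 1: if F v ≤ 0 and z is independent of v, then F z ≤ 0
  have le_step : ∀ (v z : Fin n → ℝ), v ≠ 0 → F v ≤ 0 →
      (∀ a b : ℝ, a • z + b • v = 0 → a = 0 ∧ b = 0) → F z ≤ 0 := by
    intro v z hv hFv hind
    have T := tendsto_key F hsmooth z v hv
    have hev : ∀ᶠ R in atTop,
        2 * F z ≤ R * ((F (v + R⁻¹ • z) + F (v + R⁻¹ • (-z))) - 2 * F v) := by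
      filter_upwards [eventually_gt_atTop (0:ℝ)] with R hR
      have h1 := ineq_key F hcont hsmooth hhom hquasi z v hind R hR
      have h2 : R * (2 * F v) ≤ 0 :=
        mul_nonpos_of_nonneg_of_nonpos hR.le (by linarith)
      have hid : R * ((F (v + R⁻¹ • z) + F (v + R⁻¹ • (-z))) - 2 * F v)
          = R * (F (v + R⁻¹ • z) + F (v + R⁻¹ • (-z))) - R * (2 * F v) := by ring
      linarith
    have := ge_of_tendsto T hev
    linarith
  -- Step 2: F ≤ 0 at every nonzero point
  have hall : ∀ z : Fin n → ℝ, z ≠ 0 → F z ≤ 0 := by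
    intro z hz
    by_cases hind : ∀ a b : ℝ, a • z + b • y0 = 0 → a = 0 ∧ b = 0
    · exact le_step y0 z hy0 hcon hind
    · push_neg at hind
      obtain ⟨a, b, hab, hne⟩ := hind
      have ha : a ≠ 0 := by
        intro ha0
        rw [ha0, zero_smul, zero_add] at hab
        rcases smul_eq_zero.mp hab with h | h
        · exact hne ha0 h
        · exact hy0 h
      have hz' : z = (a⁻¹ * (-b)) • y0 := by
        have h1 : a • z = (-b) • y0 := by
          rw [neg_smul]
          exact eq_neg_of_add_eq_zero_left hab
        rw [mul_smul, ← h1, smul_smul, inv_mul_cancel₀ ha, one_smul]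
      rw [hz', hhom]
      exact mul_nonpos_of_nonneg_of_nonpos (abs_nonneg _) hcon
  -- Step 3: find w independent of y0, deduce F y0 < 0 strictly
  obtain ⟨w, hw⟩ := exists_indep hn y0 hy0
  have hindsw : ∀ a b : ℝ, a • y0 + b • w = 0 → a = 0 ∧ b = 0 := by
    intro a b h
    have := hw b a (by rwa [add_comm] at h)
    exact ⟨this.2, this.1⟩
  have hmid := midpoint_lt F hcont hsmooth hquasi y0 w hindsw
  have h1 : y0 + w ≠ 0 := by
    intro h
    have := hindsw 1 1 (by simpa using h)
    simpa using this.1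
  have h2 : y0 - w ≠ 0 := by
    intro h
    have := hindsw 1 (-1) (by rw [one_smul, neg_smul, one_smul, ← sub_eq_add_neg]; exact h)
    simpa using this.1
  have hneg : F y0 < 0 := by
    have := hall _ h1
    have := hall _ h2
    linarith
  -- Step 4: contradiction via the limit going to -infinity
  have T := tendsto_key F hsmooth w y0 hy0
  have hbot : Tendsto (fun R : ℝ =>
      R * ((F (y0 + R⁻¹ • w) + F (y0 + R⁻¹ • (-w))) - 2 * F y0) + R * (2 * F y0))
      atTop atBot :=
    T.add_atBot ((tendsto_mul_const_atBot_of_neg (by linarith : 2 * F y0 < 0)).mpr tendsto_id)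
  obtain ⟨R, hR1, hR2⟩ :=
    ((hbot.eventually (eventually_lt_atBot (2 * F w))).and (eventually_gt_atTop 0)).exists
  have hik := ineq_key F hcont hsmooth hhom hquasi w y0 hw R hR2
  have hid : R * ((F (y0 + R⁻¹ • w) + F (y0 + R⁻¹ • (-w))) - 2 * F y0) + R * (2 * F y0)
      = R * (F (y0 + R⁻¹ • w) + F (y0 + R⁻¹ • (-w))) := by ring
  linarith
end

section
/- Let F : ℝⁿ → ℝ (n ≥ 2) be smooth on ℝⁿ \ {0}, continuous on ℝⁿ, positively homogeneous of degree 1, with positive quasi-definite Hessian at every nonzero point. Then there exists a linear functional α : ℝⁿ → ℝ such that F(y) + α(y) > 0 for all y ≠ 0. -/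
open Filter Topology Set

private lemma aux_diff {n : ℕ} (F : (Fin n → ℝ) → ℝ)
    (hsmooth : ContDiffOn ℝ (⊤ : ℕ∞) F {y | y ≠ 0}) :
    ∀ z : Fin n → ℝ, z ≠ 0 → DifferentiableAt ℝ F z := fun z hz =>
  (hsmooth.contDiffAt (isOpen_ne.mem_nhds hz)).differentiableAt (by simp)

private lemma aux_euler {n : ℕ} (F : (Fin n → ℝ) → ℝ)
    (hsmooth : ContDiffOn ℝ (⊤ : ℕ∞) F {y | y ≠ 0})
    (hhom : ∀ k : ℝ, 0 < k → ∀ y : Fin n → ℝ, F (k • y) = k * F y)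
    {x : Fin n → ℝ} (hx : x ≠ 0) :
    fderiv ℝ F x x = F x := by
  have hdx := aux_diff F hsmooth x hx
  have hline : HasDerivAt (fun t : ℝ => t • x) x 1 := by
    simpa using (hasDerivAt_id (1:ℝ)).smul_const x
  have hFx : HasFDerivAt F (fderiv ℝ F x) ((fun t : ℝ => t • x) 1) := by
    simpa using hdx.hasFDerivAt
  have h1 : HasDerivAt (fun t : ℝ => F (t • x)) (fderiv ℝ F x x) 1 :=
    hFx.comp_hasDerivAt 1 hline
  have heq : (fun t : ℝ => t * F x) =ᶠ[nhds (1:ℝ)] fun t : ℝ => F (t • x) := by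
    filter_upwards [Ioi_mem_nhds (by norm_num : (0:ℝ) < 1)] with t ht
    exact (hhom t ht x).symm
  have h2 : HasDerivAt (fun t : ℝ => F (t • x)) (F x) 1 :=
    (hasDerivAt_mul_const (F x)).congr_of_eventuallyEq heq.symm
  exact h1.unique h2

private lemma aux_key {n : ℕ} (F : (Fin n → ℝ) → ℝ)
    (hsmooth : ContDiffOn ℝ (⊤ : ℕ∞) F {y | y ≠ 0})
    (hhom : ∀ k : ℝ, 0 < k → ∀ y : Fin n → ℝ, F (k • y) = k * F y)
    (hquasi : ∀ y : Fin n → ℝ, y ≠ 0 → ∀ v : Fin n → ℝ,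
      0 ≤ iteratedFDeriv ℝ 2 F y ![v, v] ∧
      (iteratedFDeriv ℝ 2 F y ![v, v] = 0 → ∃ c : ℝ, v = c • y))
    {x y : Fin n → ℝ} (hx : x ≠ 0) (hmul : ∀ c : ℝ, y ≠ c • x) :
    fderiv ℝ F x y < F y := by
  set v : Fin n → ℝ := y - x with hv
  -- the segment from x to y avoids the origin
  have hseg : ∀ t : ℝ, t ∈ Set.Icc (0:ℝ) 1 → x + t • v ≠ 0 := by
    intro t ht h0
    rcases eq_or_ne t 0 with rfl | htne
    · apply hx; simpa using h0
    · have h1 : t • y - (t - 1) • x = x + t • v := by rw [hv]; module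
      rw [h0] at h1
      have h2 : t • y = (t - 1) • x := sub_eq_zero.mp h1
      exact hmul (t⁻¹ * (t - 1)) (by
        calc y = t⁻¹ • (t • y) := by rw [smul_smul, inv_mul_cancel₀ htne, one_smul]
        _ = (t⁻¹ * (t - 1)) • x := by rw [h2, smul_smul])
  have hdiff := aux_diff F hsmooth
  have hs2 : ContDiffOn ℝ (⊤ : ℕ∞) (fun z => fderiv ℝ F z) {y : Fin n → ℝ | y ≠ 0} :=
    hsmooth.fderiv_of_isOpen isOpen_ne (by simp)
  have hd2 : ∀ z : Fin n → ℝ, z ≠ 0 → DifferentiableAt ℝ (fun z => fderiv ℝ F z) z := fun z hz =>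
    (hs2.contDiffAt (isOpen_ne.mem_nhds hz)).differentiableAt (by simp)
  set c : ℝ → (Fin n → ℝ) := fun t => x + t • v with hc
  have hcder : ∀ t : ℝ, HasDerivAt c v t := fun t => by
    rw [hc]; simpa using ((hasDerivAt_id t).smul_const v).const_add x
  have hg : ∀ t ∈ Set.Icc (0:ℝ) 1,
      HasDerivAt (fun t => F (c t)) (fderiv ℝ F (c t) v) t := fun t ht =>
    (hdiff _ (hseg t ht)).hasFDerivAt.comp_hasDerivAt t (hcder t)
  set g1 : ℝ → ℝ := fun t => fderiv ℝ F (c t) v with hg1def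
  have hg1 : ∀ t ∈ Set.Icc (0:ℝ) 1,
      HasDerivAt g1 ((fderiv ℝ (fun z => fderiv ℝ F z) (c t) v) v) t := by
    intro t ht
    have h1 : HasFDerivAt (fun z : Fin n → ℝ => (fderiv ℝ F z) v)
        ((ContinuousLinearMap.apply ℝ ℝ v).comp (fderiv ℝ (fun z => fderiv ℝ F z) (c t)))
        (c t) :=
      (ContinuousLinearMap.apply ℝ ℝ v).hasFDerivAt.comp _ (hd2 _ (hseg t ht)).hasFDerivAt
    have h2 := h1.comp_hasDerivAt t (hcder t); simp at h2; exact h2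
  -- positivity of second derivative inside the segment
  have hpos : ∀ t ∈ Set.Ioo (0:ℝ) 1, 0 < (fderiv ℝ (fun z => fderiv ℝ F z) (c t) v) v := by
    intro t ht
    have htI : t ∈ Set.Icc (0:ℝ) 1 := Set.Ioo_subset_Icc_self ht
    have hz := hseg t htI
    have hiter : iteratedFDeriv ℝ 2 F (c t) ![v, v]
        = (fderiv ℝ (fun z => fderiv ℝ F z) (c t) v) v := by
      rw [iteratedFDeriv_two_apply]
      simp
    obtain ⟨hge, heq⟩ := hquasi (c t) hz v
    rcases lt_or_eq_of_le hge with h | h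
    · rwa [hiter] at h
    · exfalso
      obtain ⟨cc, hcc⟩ := heq h.symm
      have h1 : (1 - cc * t) • v = cc • x := by
        calc (1 - cc * t) • v = v - (cc * t) • v := by rw [sub_smul, one_smul]
        _ = cc • (x + t • v) - (cc * t) • v := by rw [← hcc]
        _ = cc • x := by rw [smul_add, smul_smul]; abel
      by_cases hct : 1 - cc * t = 0
      · rw [hct, zero_smul] at h1
        have hcc0 : cc ≠ 0 := by
          intro h0; rw [h0] at hct; norm_num at hct
        exact hx (by
          have := h1.symm
          rcases smul_eq_zero.mp this with h' | h'
          · exact absurd h' hcc0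
          · exact h')
      · have hveq : v = ((1 - cc * t)⁻¹ * cc) • x := by
          calc v = (1 - cc * t)⁻¹ • ((1 - cc * t) • v) := by
                rw [smul_smul, inv_mul_cancel₀ hct, one_smul]
          _ = ((1 - cc * t)⁻¹ * cc) • x := by rw [h1, smul_smul]
        exact hmul (1 + (1 - cc * t)⁻¹ * cc) (by
          calc y = x + v := by rw [hv]; abel
          _ = (1 + (1 - cc * t)⁻¹ * cc) • x := by rw [hveq, add_smul, one_smul])
  -- g1 is strictly monotone on [0,1]
  have hcont1 : ContinuousOn g1 (Set.Icc (0:ℝ) 1) := by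
    have hc1 : ContinuousOn (fun z : Fin n → ℝ => fderiv ℝ F z) {y : Fin n → ℝ | y ≠ 0} :=
      hs2.continuousOn
    have hcc : Continuous c := by
      exact continuous_const.add (continuous_id.smul continuous_const)
    have h1 : ContinuousOn (fun t : ℝ => fderiv ℝ F (c t)) (Set.Icc 0 1) :=
      hc1.comp hcc.continuousOn (fun t ht => hseg t ht)
    exact h1.clm_apply continuousOn_const
  have hmono : StrictMonoOn g1 (Set.Icc (0:ℝ) 1) := by
    apply strictMonoOn_of_deriv_pos (convex_Icc 0 1) hcont1
    intro t ht
    rw [interior_Icc] at ht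
    rw [(hg1 t (Set.Ioo_subset_Icc_self ht)).deriv]
    exact hpos t ht
  -- MVT
  have hgc : ContinuousOn (fun t => F (c t)) (Set.Icc (0:ℝ) 1) := fun t ht =>
    ((hg t ht).continuousAt.continuousWithinAt)
  obtain ⟨t₀, ht₀, hslope⟩ := exists_deriv_eq_slope (fun t => F (c t)) one_pos hgc
    (fun t ht => (hg t (Set.Ioo_subset_Icc_self ht)).differentiableAt.differentiableWithinAt)
  have hd0 : deriv (fun t => F (c t)) t₀ = g1 t₀ :=
    (hg t₀ (Set.Ioo_subset_Icc_self ht₀)).deriv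
  have hc1 : c 1 = y := by rw [hc]; simp [hv]
  have hc0 : c 0 = x := by rw [hc]; simp
  have hkey : F y - F x = g1 t₀ := by
    rw [hd0] at hslope
    rw [← hc1]
    rw [← hc0]
    field_simp at hslope
    linarith [hslope]
  have hlt : g1 0 < g1 t₀ :=
    hmono (Set.left_mem_Icc.mpr zero_le_one) (Set.Ioo_subset_Icc_self ht₀) ht₀.1
  have hg10 : g1 0 = fderiv ℝ F x y - F x := by
    rw [hg1def]
    simp only [hc0]
    rw [hv, map_sub, aux_euler F hsmooth hhom hx]
  linarith

private lemma aux_wk {n : ℕ} (F : (Fin n → ℝ) → ℝ)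
    (hsmooth : ContDiffOn ℝ (⊤ : ℕ∞) F {y | y ≠ 0})
    (hhom : ∀ k : ℝ, 0 < k → ∀ y : Fin n → ℝ, F (k • y) = k * F y)
    (hquasi : ∀ y : Fin n → ℝ, y ≠ 0 → ∀ v : Fin n → ℝ,
      0 ≤ iteratedFDeriv ℝ 2 F y ![v, v] ∧
      (iteratedFDeriv ℝ 2 F y ![v, v] = 0 → ∃ c : ℝ, v = c • y))
    {x x' y : Fin n → ℝ} (hx : x ≠ 0) (hx' : x' ≠ 0)
    (hxx' : ∀ c : ℝ, x ≠ c • x') (hy : y ≠ 0) :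
    fderiv ℝ F x y ≤ F y := by
  by_cases h : ∃ c : ℝ, y = c • x
  · obtain ⟨c, rfl⟩ := h
    have hc0 : c ≠ 0 := by rintro rfl; simp at hy
    have heval : fderiv ℝ F x (c • x) = c * F x := by
      rw [map_smul, smul_eq_mul, aux_euler F hsmooth hhom hx]
    rcases lt_or_gt_of_ne hc0 with hneg | hposc
    · have h1 : F (c • x) = -c * F (-x) := by
        have h' := hhom (-c) (by linarith) (-x)
        rw [show (-c) • (-x) = c • x by module] at h'
        exact h'
      have h3 : fderiv ℝ F x' x < F x :=
        aux_key F hsmooth hhom hquasi hx' hxx'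
      have h4 : fderiv ℝ F x' (-x) < F (-x) := by
        apply aux_key F hsmooth hhom hquasi hx'
        intro d hd
        exact hxx' (-d) (by rw [neg_smul, ← hd, neg_neg])
      rw [map_neg] at h4
      have h5 : 0 < F x + F (-x) := by linarith
      rw [h1, heval]
      nlinarith
    · rw [hhom c hposc x, heval]
  · push_neg at h
    exact (aux_key F hsmooth hhom hquasi hx h).le

theorem exists_linear_correction_positive (n : ℕ) (hn : 2 ≤ n)
    (F : (Fin n → ℝ) → ℝ)
    (hcont : Continuous F)
    (hsmooth : ContDiffOn ℝ (⊤ : ℕ∞) F {y | y ≠ 0})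
    (hhom : ∀ k : ℝ, 0 < k → ∀ y : Fin n → ℝ, F (k • y) = k * F y)
    (hquasi : ∀ y : Fin n → ℝ, y ≠ 0 → ∀ v : Fin n → ℝ,
      0 ≤ iteratedFDeriv ℝ 2 F y ![v, v] ∧
      (iteratedFDeriv ℝ 2 F y ![v, v] = 0 → ∃ c : ℝ, v = c • y)) :
    ∃ α : (Fin n → ℝ) →ₗ[ℝ] ℝ, ∀ y : Fin n → ℝ, y ≠ 0 → 0 < F y + α y := by
  set i₀ : Fin n := ⟨0, by omega⟩ with hi₀
  set i₁ : Fin n := ⟨1, by omega⟩ with hi₁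
  have hii : i₀ ≠ i₁ := by simp [hi₀, hi₁, Fin.ext_iff]
  set x₀ : Fin n → ℝ := Pi.single i₀ 1 with hx₀def
  set x₁ : Fin n → ℝ := Pi.single i₁ 1 with hx₁def
  have hx₀ : x₀ ≠ 0 := by
    intro h
    have := congrFun h i₀
    simp [hx₀def] at this
  have hx₁ : x₁ ≠ 0 := by
    intro h
    have := congrFun h i₁
    simp [hx₁def] at this
  have h01 : ∀ c : ℝ, x₀ ≠ c • x₁ := by
    intro c h
    have := congrFun h i₀
    simp [hx₀def, hx₁def, Pi.single_eq_of_ne hii] at this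
  have h10 : ∀ c : ℝ, x₁ ≠ c • x₀ := by
    intro c h
    have := congrFun h i₁
    simp [hx₀def, hx₁def, Pi.single_eq_of_ne hii.symm] at this
  set L₀ : (Fin n → ℝ) →L[ℝ] ℝ := fderiv ℝ F x₀ with hL₀
  set L₁ : (Fin n → ℝ) →L[ℝ] ℝ := fderiv ℝ F x₁ with hL₁
  refine ⟨-((2⁻¹ : ℝ) • ((L₀ : (Fin n → ℝ) →ₗ[ℝ] ℝ) + (L₁ : (Fin n → ℝ) →ₗ[ℝ] ℝ))), ?_⟩
  intro y hy
  have hα : (-((2⁻¹ : ℝ) • ((L₀ : (Fin n → ℝ) →ₗ[ℝ] ℝ) + (L₁ : (Fin n → ℝ) →ₗ[ℝ] ℝ)))) y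
      = -(2⁻¹ * (L₀ y + L₁ y)) := by
    simp [smul_eq_mul]
    ring
  rw [hα]
  by_cases h : ∃ c : ℝ, y = c • x₀
  · obtain ⟨c, rfl⟩ := h
    have hc0 : c ≠ 0 := by rintro rfl; simp at hy
    have hmul1 : ∀ d : ℝ, c • x₀ ≠ d • x₁ := by
      intro d hd
      have h0 := congrFun hd i₀
      have h1 := congrFun hd i₁
      simp [hx₀def, hx₁def, Pi.single_eq_of_ne hii, Pi.single_eq_of_ne hii.symm] at h0 h1
      exact hc0 h0
    have k1 : fderiv ℝ F x₁ (c • x₀) < F (c • x₀) :=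
      aux_key F hsmooth hhom hquasi hx₁ hmul1
    have k0 : fderiv ℝ F x₀ (c • x₀) ≤ F (c • x₀) :=
      aux_wk F hsmooth hhom hquasi hx₀ hx₁ h01 hy
    rw [hL₀, hL₁] at *
    linarith
  · push_neg at h
    have k0 : fderiv ℝ F x₀ y < F y :=
      aux_key F hsmooth hhom hquasi hx₀ h
    have k1 : fderiv ℝ F x₁ y ≤ F y :=
      aux_wk F hsmooth hhom hquasi hx₁ hx₀ h10 hy
    rw [hL₀, hL₁] at *
    linarith
end

section
/- Let h : ℝⁿ \ {0} → Sym²((ℝⁿ)*) (n ≥ 2) be a smooth symmetric bilinear-form-valued map with components h_{ij} satisfying h_{ij}(y) yʲ = 0 for all y ≠ 0 and ∂h_{ij}/∂y^k = ∂h_{ik}/∂y^j. Then h is positively homogeneous of degree −1: y^k ∂h_{ij}/∂y^k = −h_{ij}. -/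
theorem multiplier_homogeneous_of_degree_neg_one (n : ℕ) (hn : 2 ≤ n)
    (h : (Fin n → ℝ) → Fin n → Fin n → ℝ)
    (hsmooth : ∀ i j : Fin n, ContDiffOn ℝ (⊤ : ℕ∞) (fun y => h y i j) {y | y ≠ 0})
    (hsymm : ∀ y : Fin n → ℝ, y ≠ 0 → ∀ i j : Fin n, h y i j = h y j i)
    (hrad : ∀ y : Fin n → ℝ, y ≠ 0 → ∀ i : Fin n, ∑ j, h y i j * y j = 0)
    (hclosed : ∀ y : Fin n → ℝ, y ≠ 0 → ∀ i j k : Fin n,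
      fderiv ℝ (fun y => h y i j) y (Pi.single k 1) =
      fderiv ℝ (fun y => h y i k) y (Pi.single j 1)) :
    ∀ y : Fin n → ℝ, y ≠ 0 → ∀ i j : Fin n,
      ∑ k, y k * fderiv ℝ (fun y => h y i j) y (Pi.single k 1) = - h y i j := by
  intro y hy i j
  have hopen : IsOpen {y : Fin n → ℝ | y ≠ 0} := isOpen_compl_singleton
  have hmem : {y : Fin n → ℝ | y ≠ 0} ∈ nhds y := hopen.mem_nhds hy
  have hdiff : ∀ k : Fin n, DifferentiableAt ℝ (fun y => h y i k) y := fun k =>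
    ((hsmooth i k).contDiffAt hmem).differentiableAt (by simp)
  have hF : HasFDerivAt (fun y : Fin n → ℝ => ∑ k, h y i k * y k)
      (∑ k, (y k • fderiv ℝ (fun y => h y i k) y +
        h y i k • (ContinuousLinearMap.proj k : (Fin n → ℝ) →L[ℝ] ℝ))) y := by
    apply HasFDerivAt.fun_sum
    intro k _
    have h1 := (hdiff k).hasFDerivAt
    have h2 : HasFDerivAt (fun y : Fin n → ℝ => y k)
        ((ContinuousLinearMap.proj k : (Fin n → ℝ) →L[ℝ] ℝ)) y :=
      hasFDerivAt_apply k y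
    simpa [add_comm] using h1.fun_mul h2
  have hzero : fderiv ℝ (fun y : Fin n → ℝ => ∑ k, h y i k * y k) y = 0 := by
    have heq : (fun y : Fin n → ℝ => ∑ k, h y i k * y k) =ᶠ[nhds y] fun _ => 0 := by
      filter_upwards [hmem] with z hz
      exact hrad z hz i
    rw [heq.fderiv_eq]
    exact fderiv_const_apply 0
  have hEq := hF.fderiv
  rw [hzero] at hEq
  have hEval := congrArg (fun (L : (Fin n → ℝ) →L[ℝ] ℝ) => L (Pi.single j 1)) hEq
  simp only [ContinuousLinearMap.zero_apply, ContinuousLinearMap.sum_apply,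
    ContinuousLinearMap.add_apply, ContinuousLinearMap.smul_apply,
    ContinuousLinearMap.proj_apply, smul_eq_mul] at hEval
  have hsingle : ∀ k : Fin n, (Pi.single j (1:ℝ) : Fin n → ℝ) k = if k = j then 1 else 0 := by
    intro k; rw [Pi.single_apply]
  have hEval2 : (0:ℝ) = (∑ k, y k * fderiv ℝ (fun y => h y i k) y (Pi.single j 1)) + h y i j := by
    rw [hEval, Finset.sum_add_distrib]
    congr 1
    rw [Finset.sum_eq_single j]
    · simp [hsingle]
    · intro k _ hk; simp [hsingle, hk]
    · intro hj; exact absurd (Finset.mem_univ j) hj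
  have hkey : ∀ k : Fin n, fderiv ℝ (fun y => h y i j) y (Pi.single k 1) =
      fderiv ℝ (fun y => h y i k) y (Pi.single j 1) := fun k => hclosed y hy i j k
  calc ∑ k, y k * fderiv ℝ (fun y => h y i j) y (Pi.single k 1)
      = ∑ k, y k * fderiv ℝ (fun y => h y i k) y (Pi.single j 1) := by
        exact Finset.sum_congr rfl fun k _ => by rw [hkey k]
    _ = - h y i j := by linarith [hEval2]
end

section
/- Let h : ℝ² \ {0} → Sym²((ℝ²)*) be smooth, symmetric, positively homogeneous of degree −1 (i.e. y^k ∂h_{ij}/∂y^k = −h_{ij}), and satisfy h_{ij} yʲ = 0. Then ∂h_{ij}/∂y^k = ∂h_{ik}/∂y^j for all indices i, j, k. -/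
theorem two_dim_closedness_automatic
    (h : (Fin 2 → ℝ) → Fin 2 → Fin 2 → ℝ)
    (hsmooth : ∀ i j : Fin 2, ContDiffOn ℝ (⊤ : ℕ∞) (fun y => h y i j) {y | y ≠ 0})
    (hsymm : ∀ y : Fin 2 → ℝ, y ≠ 0 → ∀ i j : Fin 2, h y i j = h y j i)
    (hhom : ∀ y : Fin 2 → ℝ, y ≠ 0 → ∀ i j : Fin 2,
      ∑ k, y k * fderiv ℝ (fun y => h y i j) y (Pi.single k 1) = - h y i j)
    (hrad : ∀ y : Fin 2 → ℝ, y ≠ 0 → ∀ i : Fin 2, ∑ j, h y i j * y j = 0) :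
    ∀ y : Fin 2 → ℝ, y ≠ 0 → ∀ i j k : Fin 2,
      fderiv ℝ (fun y => h y i j) y (Pi.single k 1) =
      fderiv ℝ (fun y => h y i k) y (Pi.single j 1) := by
  intro y hy i j k
  have hopen : IsOpen {y : Fin 2 → ℝ | y ≠ 0} := isOpen_compl_singleton
  have hdiff : ∀ (a b : Fin 2), DifferentiableAt ℝ (fun y => h y a b) y := by
    intro a b
    exact ((hsmooth a b).differentiableOn (by simp)).differentiableAt (hopen.mem_nhds hy)
  -- differentiated radial identity
  have hrad' : ∀ m : Fin 2,
      y 0 * fderiv ℝ (fun y => h y i 0) y (Pi.single m 1)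
      + y 1 * fderiv ℝ (fun y => h y i 1) y (Pi.single m 1) = - h y i m := by
    intro m
    have hF0 : HasFDerivAt (fun y : Fin 2 → ℝ => h y i 0 * y 0 + h y i 1 * y 1)
        (0 : (Fin 2 → ℝ) →L[ℝ] ℝ) y := by
      have hev : (fun y : Fin 2 → ℝ => h y i 0 * y 0 + h y i 1 * y 1) =ᶠ[nhds y]
          (fun _ => (0 : ℝ)) := by
        filter_upwards [hopen.mem_nhds hy] with z hz
        simpa [Fin.sum_univ_two] using hrad z hz i
      exact (hasFDerivAt_const (0 : ℝ) y).congr_of_eventuallyEq hev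
    have hproj : ∀ n : Fin 2, HasFDerivAt (fun y : Fin 2 → ℝ => y n)
        (ContinuousLinearMap.proj n : (Fin 2 → ℝ) →L[ℝ] ℝ) y :=
      fun n => (ContinuousLinearMap.proj n : (Fin 2 → ℝ) →L[ℝ] ℝ).hasFDerivAt
    have hF : HasFDerivAt (fun y : Fin 2 → ℝ => h y i 0 * y 0 + h y i 1 * y 1)
        ((h y i 0 • (ContinuousLinearMap.proj 0 : (Fin 2 → ℝ) →L[ℝ] ℝ)
            + y 0 • fderiv ℝ (fun y => h y i 0) y)
          + (h y i 1 • (ContinuousLinearMap.proj 1 : (Fin 2 → ℝ) →L[ℝ] ℝ)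
            + y 1 • fderiv ℝ (fun y => h y i 1) y)) y :=
      (((hdiff i 0).hasFDerivAt.mul (hproj 0))).add ((hdiff i 1).hasFDerivAt.mul (hproj 1))
    have heq := hF0.unique hF
    have h2 := congrArg (fun L : (Fin 2 → ℝ) →L[ℝ] ℝ => L (Pi.single m 1)) heq
    simp only [ContinuousLinearMap.add_apply, ContinuousLinearMap.smul_apply,
      ContinuousLinearMap.proj_apply, ContinuousLinearMap.zero_apply, smul_eq_mul,
      Pi.single_apply] at h2
    fin_cases m <;> simp at h2 ⊢ <;> linarith
  have H0 := hhom y hy i 0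
  have H1 := hhom y hy i 1
  rw [Fin.sum_univ_two] at H0 H1
  have R0 := hrad' 0
  have R1 := hrad' 1
  rcases Function.ne_iff.mp hy with ⟨m, hm⟩
  fin_cases j <;> fin_cases k <;> fin_cases m <;> simp at hm ⊢ <;>
    first
      | rfl
      | (apply mul_left_cancel₀ hm; linarith)
end

section
/- Fix r₀ > 0, n ≥ 1, and let Γⁱ : ℝⁿ × ℝⁿ → ℝ be continuous functions, positively homogeneous of degree 2 in the second argument, with |Γⁱ(x,y)| < K for all i whenever |x| ≤ r₀ and |y| = 1 (Euclidean norms). Let γ be a C² curve satisfying γ̈ⁱ = −2Γⁱ(γ, γ̇) with |γ̇(0)| = 1, |γ(0)| = r for some 0 < r ≤ r₀ with r < 1/(2nK), and ⟨γ(0), γ̇(0)⟩ = 0. Then the function V(s) = |γ(s)|² − r² satisfies V(0) = 0, V'(0) = 0 and V''(0) > 0; hence V(s) > 0 for all s ≠ 0 in some punctured neighbourhood of 0. -/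
/-! The function `V = ‖γ‖² - r²` vanishes at `0` and `V'(0) = 2⟪γ(0), γ'(0)⟫ = 0`, while
`V''(0) = 2‖γ'(0)‖² + 2⟪γ(0), γ''(0)⟫`. The geodesic equation bounds every coordinate of `γ''(0)`
by `2K`, so `|⟪γ(0), γ''(0)⟫| ≤ 2nrK < 1` and `V''(0) > 0`. Near a critical point with positive
second derivative, `V'` has the sign of `s`, so `V` is strictly monotone on either side of `0`. -/

open scoped RealInnerProductSpace
open Filter Topology Set

theorem eventually_nhdsNE_lt_of_deriv_deriv_pos {f : ℝ → ℝ} {x₀ : ℝ}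
    (hf : 0 < deriv (deriv f) x₀) (hd : deriv f x₀ = 0) (hc : ContinuousAt f x₀) :
    ∀ᶠ x in 𝓝[≠] x₀, f x₀ < f x := by
  obtain ⟨ε, hε, hsign⟩ := Metric.eventually_nhds_iff_ball.mp
    (eventually_nhdsWithin_sign_eq_of_deriv_pos hf hd)
  have hpos : ∀ x ∈ Ioo x₀ (x₀ + ε), 0 < deriv f x := fun x hx => by
    have hx' : x ∈ Metric.ball x₀ ε := by
      rw [Real.ball_eq_Ioo]; exact ⟨by linarith [hx.1], hx.2⟩
    rw [← sign_eq_one_iff, hsign x hx', sign_eq_one_iff, sub_pos]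
    exact hx.1
  have hneg : ∀ x ∈ Ioo (x₀ - ε) x₀, deriv f x < 0 := fun x hx => by
    have hx' : x ∈ Metric.ball x₀ ε := by
      rw [Real.ball_eq_Ioo]; exact ⟨hx.1, by linarith [hx.2]⟩
    rw [← sign_eq_neg_one_iff, hsign x hx', sign_eq_neg_one_iff, sub_neg]
    exact hx.2
  -- `f` is differentiable wherever its derivative is nonzero
  have hcont : ContinuousOn f (Ioo (x₀ - ε) (x₀ + ε)) := by
    intro x hx
    rcases lt_trichotomy x x₀ with hlt | rfl | hgt
    · exact (differentiableAt_of_deriv_ne_zero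
        (hneg x ⟨hx.1, hlt⟩).ne).continuousAt.continuousWithinAt
    · exact hc.continuousWithinAt
    · exact (differentiableAt_of_deriv_ne_zero
        (hpos x ⟨hgt, hx.2⟩).ne').continuousAt.continuousWithinAt
  have hmono : StrictMonoOn f (Ico x₀ (x₀ + ε)) :=
    strictMonoOn_of_deriv_pos (convex_Ico _ _)
      (hcont.mono (Ico_subset_Ioo_left (by linarith))) (by rwa [interior_Ico])
  have hanti : StrictAntiOn f (Ioc (x₀ - ε) x₀) :=
    strictAntiOn_of_deriv_neg (convex_Ioc _ _)
      (hcont.mono (Ioc_subset_Ioo_right (by linarith))) (by rwa [interior_Ioc])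
  filter_upwards [inter_mem_nhdsWithin {x₀}ᶜ (Ioo_mem_nhds (by linarith : x₀ - ε < x₀)
    (by linarith : x₀ < x₀ + ε))] with x ⟨hne, hx⟩
  rcases lt_or_gt_of_ne hne with hlt | hgt
  · exact hanti ⟨hx.1, hlt.le⟩ ⟨by linarith, le_rfl⟩ hlt
  · exact hmono ⟨le_rfl, by linarith⟩ ⟨hgt.le, hx.2⟩ hgt

theorem PiLp.deriv_apply {𝕜 ι : Type*} [NontriviallyNormedField 𝕜] [Fintype ι] {p : ENNReal}
    [Fact (1 ≤ p)] {E : ι → Type*} [∀ i, NormedAddCommGroup (E i)] [∀ i, NormedSpace 𝕜 (E i)]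
    {γ : 𝕜 → PiLp p E} {s : 𝕜} (hγ : DifferentiableAt 𝕜 γ s) (i : ι) :
    deriv (fun t => γ t i) s = deriv γ s i :=
  ((PiLp.proj p E i).hasFDerivAt.comp_hasDerivAt s hγ.hasDerivAt).deriv

theorem abs_inner_le_card_mul_norm_mul {ι : Type*} [Fintype ι] (x y : EuclideanSpace ℝ ι)
    {K : ℝ} (hy : ∀ i, |y i| ≤ K) : |⟪x, y⟫| ≤ Fintype.card ι * ‖x‖ * K := by
  calc |⟪x, y⟫| = |∑ i, x i * y i| := by simp [PiLp.inner_apply, mul_comm]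
    _ ≤ ∑ i, |x i| * |y i| := by
        simpa only [abs_mul] using Finset.abs_sum_le_sum_abs (fun i => x i * y i) Finset.univ
    _ ≤ ∑ _i : ι, ‖x‖ * K := Finset.sum_le_sum fun i _ =>
        mul_le_mul (by simpa using PiLp.norm_apply_le x i) (hy i) (abs_nonneg _) (norm_nonneg _)
    _ = Fintype.card ι * ‖x‖ * K := by simp [mul_assoc]

section

variable {F : Type*} [NormedAddCommGroup F] [InnerProductSpace ℝ F]

theorem deriv_norm_sq {γ : ℝ → F} (hγ : Differentiable ℝ γ) :
    deriv (fun s => ‖γ s‖ ^ 2) = fun s => 2 * ⟪γ s, deriv γ s⟫ :=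
  funext fun s => (hγ s).hasDerivAt.norm_sq.deriv

theorem deriv_deriv_norm_sq {γ : ℝ → F} (hγ : ContDiff ℝ 2 γ) (s : ℝ) :
    deriv (deriv fun s => ‖γ s‖ ^ 2) s = 2 * (‖deriv γ s‖ ^ 2 + ⟪γ s, deriv (deriv γ) s⟫) := by
  have hinner := (hγ.differentiable two_ne_zero s).hasDerivAt.inner ℝ
    (hγ.differentiable_deriv_two s).hasDerivAt
  rw [deriv_norm_sq (hγ.differentiable two_ne_zero), (hinner.const_mul 2).deriv,
    real_inner_self_eq_norm_sq]
  ring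

end

theorem whitehead_convexity_estimate_general (n : ℕ)
    (r₀ K r : ℝ)
    (Γ : EuclideanSpace ℝ (Fin n) → EuclideanSpace ℝ (Fin n) → Fin n → ℝ)
    (hΓbound : ∀ (i : Fin n) (x y : EuclideanSpace ℝ (Fin n)),
      ‖x‖ ≤ r₀ → ‖y‖ = 1 → |Γ x y i| < K)
    (γ : ℝ → EuclideanSpace ℝ (Fin n))
    (hγ : ContDiff ℝ 2 γ)
    (hode : ∀ (s : ℝ) (i : Fin n),
      deriv (deriv fun t => γ t i) s = -2 * Γ (γ s) (deriv γ s) i)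
    (hspeed : ‖deriv γ 0‖ = 1)
    (hrle : r ≤ r₀) (hrK : r < 1 / (2 * n * K))
    (hinit : ‖γ 0‖ = r)
    (horth : ⟪γ 0, deriv γ 0⟫ = 0) :
    (‖γ 0‖ ^ 2 - r ^ 2 = 0) ∧
    deriv (fun s => ‖γ s‖ ^ 2 - r ^ 2) 0 = 0 ∧
    0 < deriv (deriv fun s => ‖γ s‖ ^ 2 - r ^ 2) 0 ∧
    ∃ ε > 0, ∀ s : ℝ, s ≠ 0 → |s| < ε → 0 < ‖γ s‖ ^ 2 - r ^ 2 := by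
  have hγ₁ : Differentiable ℝ γ := hγ.differentiable two_ne_zero
  have hV : deriv (fun s => ‖γ s‖ ^ 2 - r ^ 2) = deriv (fun s => ‖γ s‖ ^ 2) :=
    deriv_sub_const_fun _
  have hV' : deriv (fun s => ‖γ s‖ ^ 2 - r ^ 2) 0 = 0 := by
    simp only [hV, deriv_norm_sq hγ₁, horth, mul_zero]
  have hacc_le : ∀ i, |deriv (deriv γ) 0 i| ≤ 2 * K := fun i => by
    have hcoord : deriv (fun t => γ t i) = fun t => deriv γ t i :=
      funext fun t => PiLp.deriv_apply (hγ₁ t) i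
    rw [← PiLp.deriv_apply (hγ.differentiable_deriv_two 0) i, ← hcoord, hode, abs_mul, abs_neg,
      abs_two]
    gcongr
    exact (hΓbound i _ _ (hinit ▸ hrle) hspeed).le
  have hnrK : n * r * (2 * K) < 1 := by
    have hpos : 0 < 2 * n * K := one_div_pos.mp ((hinit ▸ norm_nonneg _).trans_lt hrK)
    rw [lt_div_iff₀ hpos] at hrK
    linarith
  have hV'' : 0 < deriv (deriv fun s => ‖γ s‖ ^ 2 - r ^ 2) 0 := by
    have := abs_inner_le_card_mul_norm_mul (γ 0) _ hacc_le
    rw [Fintype.card_fin, hinit] at this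
    rw [hV, deriv_deriv_norm_sq hγ, hspeed]
    linarith [neg_abs_le ⟪γ 0, deriv (deriv γ) 0⟫]
  refine ⟨by rw [hinit, sub_self], hV', hV'', ?_⟩
  have hVcont : ContinuousAt (fun s => ‖γ s‖ ^ 2 - r ^ 2) 0 :=
    ((hγ₁.continuous.norm.pow 2).sub continuous_const).continuousAt
  obtain ⟨ε, hε, hmin⟩ := Metric.eventually_nhds_iff.mp <| eventually_nhdsWithin_iff.mp <|
    eventually_nhdsNE_lt_of_deriv_deriv_pos hV'' hV' hVcont
  refine ⟨ε, hε, fun s hs0 hsε => ?_⟩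
  simpa [hinit] using hmin (y := s) (by rwa [Real.dist_0_eq_abs]) hs0

theorem whitehead_convexity_estimate (n : ℕ) (hn : 1 ≤ n)
    (r₀ K r : ℝ) (hr₀ : 0 < r₀) (hK : 0 < K)
    (Γ : EuclideanSpace ℝ (Fin n) → EuclideanSpace ℝ (Fin n) → Fin n → ℝ)
    (hΓcont : Continuous fun p : EuclideanSpace ℝ (Fin n) × EuclideanSpace ℝ (Fin n) => Γ p.1 p.2)
    (hΓhom : ∀ (x y : EuclideanSpace ℝ (Fin n)) (k : ℝ), 0 < k →
      ∀ i, Γ x (k • y) i = k ^ 2 * Γ x y i)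
    (hΓbound : ∀ (i : Fin n) (x y : EuclideanSpace ℝ (Fin n)),
      ‖x‖ ≤ r₀ → ‖y‖ = 1 → |Γ x y i| < K)
    (γ : ℝ → EuclideanSpace ℝ (Fin n))
    (hγ : ContDiff ℝ 2 γ)
    (hode : ∀ (s : ℝ) (i : Fin n),
      deriv (deriv fun t => γ t i) s = -2 * Γ (γ s) (deriv γ s) i)
    (hspeed : ‖deriv γ 0‖ = 1)
    (hrpos : 0 < r) (hrle : r ≤ r₀) (hrK : r < 1 / (2 * n * K))
    (hinit : ‖γ 0‖ = r)
    (horth : ⟪γ 0, deriv γ 0⟫ = 0) :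
    (‖γ 0‖ ^ 2 - r ^ 2 = 0) ∧
    deriv (fun s => ‖γ s‖ ^ 2 - r ^ 2) 0 = 0 ∧
    0 < deriv (deriv fun s => ‖γ s‖ ^ 2 - r ^ 2) 0 ∧
    ∃ ε > 0, ∀ s : ℝ, s ≠ 0 → |s| < ε → 0 < ‖γ s‖ ^ 2 - r ^ 2 :=
  whitehead_convexity_estimate_general n r₀ K r Γ hΓbound γ hγ hode hspeed hrle hrK hinit horth
end
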